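/- Fix an increasing price function P and a metropolitan price P_M. All zone tariffs with metropolitan zone with respect to P and P_M satisfy the no-elongation property if and only if P_M ≤ P(2). -/

import Mathlib

open scoped Classical

/-- A path in a graph given by adjacency relation `adj`: a nonempty list of
consecutively adjacent nodes. -/
def IsPath {V : Type*} (adj : V → V → Prop) (W : List V) : Prop :=
  W ≠ [] ∧ W.Chain' adj

/-- An `x`-`y`-path. -/
def IsXYPath {V : Type*} (adj : V → V → Prop) (x y : V) (W : List V) : Prop :=
  IsPath adj W ∧ W.head? = some x ∧ W.getLast? = some y

/-- `W` decomposes as the concatenation `W₁ + W₂` (the last node of `W₁` is the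
first node of `W₂`). -/
def Splits {V : Type*} (W W₁ W₂ : List V) : Prop :=
  W₁ ≠ [] ∧ W₂ ≠ [] ∧ W₁.getLast? = W₂.head? ∧ W = W₁ ++ W₂.tail

/-- `W` splits at an intermediate node into `W₁ + W₂` (both parts have at least
two nodes). -/
def SplitsAt {V : Type*} (W W₁ W₂ : List V) : Prop :=
  2 ≤ W₁.length ∧ 2 ≤ W₂.length ∧ W₁.getLast? = W₂.head? ∧ W = W₁ ++ W₂.tail

/-- The no-stopover property: splitting a path at an intermediate node never
decreases the total price. -/
def NoStopover {V : Type*} (adj : V → V → Prop) (p : List V → ℝ) : Prop :=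
  ∀ W W₁ W₂ : List V, IsPath adj W → IsPath adj W₁ → IsPath adj W₂ →
    SplitsAt W W₁ W₂ → p W ≤ p W₁ + p W₂

/-- The no-elongation property: removing the last node of a path never
increases the price. -/
def NoElongation {V : Type*} (adj : V → V → Prop) (p : List V → ℝ) : Prop :=
  ∀ W : List V, IsPath adj W → 2 ≤ W.length → p W.dropLast ≤ p W

/-- Number of zone borders crossed by a path (basic zone tariff). -/
noncomputable def zoneBorders {V Z : Type*} (zone : V → Z) : List V → ℕ
  | x :: y :: rest => (if zone x = zone y then 0 else 1) + zoneBorders zone (y :: rest)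
  | _ => 0

/-- A path is included in the metropolitan zone `metro` (a set of zones) if
every node on it lies in a metropolitan zone. -/
def InMetro {V Z : Type*} (zone : V → Z) (metro : Set Z) (W : List V) : Prop :=
  ∀ v ∈ W, zone v ∈ metro

/-- Price in a zone tariff with metropolitan zone: a path included in the
metropolitan zone costs `PM`; any other path costs `P(z(W))`. -/
noncomputable def metroPrice {V Z : Type*} (P : ℕ → ℝ) (PM : ℝ) (zone : V → Z)
    (metro : Set Z) (W : List V) : ℝ :=
  if InMetro zone metro W then PM else P (1 + zoneBorders zone W)

/- Truncation only changes the price when the truncated path lies in the metropolitan zone but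
the path does not; then the path leaves the zone of its first node, so it costs at least `P 2`.
The two-node path from a metropolitan zone into another one shows that `PM ≤ P 2` is needed. -/

@[simp]
lemma zoneBorders_cons_cons {V Z : Type*} (zone : V → Z) (x y : V) (l : List V) :
    zoneBorders zone (x :: y :: l) =
      (if zone x = zone y then 0 else 1) + zoneBorders zone (y :: l) := rfl

lemma zoneBorders_dropLast_le {V Z : Type*} (zone : V → Z) :
    ∀ l : List V, zoneBorders zone l.dropLast ≤ zoneBorders zone l
  | [] | [_] | [_, _] => by simp [zoneBorders]
  | x :: y :: z :: l => by
    have ih := zoneBorders_dropLast_le zone (y :: z :: l)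
    simp only [List.dropLast_cons_cons, zoneBorders_cons_cons] at ih ⊢
    omega

lemma zone_eq_of_zoneBorders_eq_zero {V Z : Type*} (zone : V → Z) (x : V) :
    ∀ l : List V, zoneBorders zone (x :: l) = 0 → ∀ v ∈ x :: l, zone v = zone x
  | [], _, v, hv => by rw [List.mem_singleton.mp hv]
  | y :: l, h, v, hv => by
    rw [zoneBorders_cons_cons, Nat.add_eq_zero_iff] at h
    have hxy : zone x = zone y := by
      by_contra hne
      simp [hne] at h
    rcases List.mem_cons.mp hv with rfl | hv
    · rfl
    · rw [hxy]
      exact zone_eq_of_zoneBorders_eq_zero zone y l h.2 v hv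

lemma InMetro.mono {V Z : Type*} {zone : V → Z} {metro : Set Z} {W W' : List V}
    (h : InMetro zone metro W) (hsub : W' ⊆ W) : InMetro zone metro W' :=
  fun v hv => h v (hsub hv)

lemma one_le_zoneBorders_of_inMetro_dropLast {V Z : Type*} {zone : V → Z} {metro : Set Z}
    {W : List V} (hlen : 2 ≤ W.length) (hdrop : InMetro zone metro W.dropLast)
    (hW : ¬ InMetro zone metro W) : 1 ≤ zoneBorders zone W := by
  obtain ⟨x, y, l, rfl⟩ : ∃ x y l, W = x :: y :: l := by
    match W, hlen with
    | x :: y :: l, _ => exact ⟨x, y, l, rfl⟩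
  have hx : zone x ∈ metro := hdrop x (by simp)
  by_contra! h0
  exact hW fun v hv =>
    zone_eq_of_zoneBorders_eq_zero zone x _ (Nat.lt_one_iff.mp h0) v hv ▸ hx

lemma metroPrice_dropLast_le {V Z : Type*} {P : ℕ → ℝ} {PM : ℝ}
    (hmono : ∀ k l : ℕ, 1 ≤ k → k ≤ l → P k ≤ P l) (hPM : PM ≤ P 2)
    (zone : V → Z) (metro : Set Z) {W : List V} (hlen : 2 ≤ W.length) :
    metroPrice P PM zone metro W.dropLast ≤ metroPrice P PM zone metro W := by
  unfold metroPrice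
  by_cases hW : InMetro zone metro W
  · rw [if_pos (hW.mono (List.dropLast_subset W)), if_pos hW]
  by_cases hdrop : InMetro zone metro W.dropLast
  · rw [if_pos hdrop, if_neg hW]
    have hcross := one_le_zoneBorders_of_inMetro_dropLast hlen hdrop hW
    exact hPM.trans (hmono 2 _ one_le_two (by omega))
  · rw [if_neg hdrop, if_neg hW]
    exact hmono _ _ (Nat.le_add_right 1 _) 
      (by have hdrop_le := zoneBorders_dropLast_le zone W; omega)

/-- Fix an increasing price function `P` and a metropolitan price `PM`. All
zone tariffs with metropolitan zone w.r.t. `P` and `PM` satisfy the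
no-elongation property if and only if `PM ≤ P(2)`. -/
theorem metro_zone_no_elongation_iff (P : ℕ → ℝ) (PM : ℝ)
    (hmono : ∀ k l : ℕ, 1 ≤ k → k ≤ l → P k ≤ P l) :
    (∀ (V Z : Type) (adj : V → V → Prop) (zone : V → Z) (metro : Set Z),
        NoElongation adj (metroPrice P PM zone metro)) ↔ PM ≤ P 2 := by
  refine ⟨fun h => ?_, fun hPM V Z adj zone metro W _ hlen =>
    metroPrice_dropLast_le hmono hPM zone metro hlen⟩
  have := h Bool Bool (fun _ _ => True) id {false} [false, true]
    ⟨List.cons_ne_nil _ _, List.isChain_pair.mpr trivial⟩ le_rfl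
  simpa [metroPrice, InMetro, zoneBorders] using this
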